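/- arXiv:2005.08953 — 2 statements merged into one kernel-verified Lean document; each statement's English description precedes it below -/
import Mathlib

section
/- Fix p > 0, α ∈ (0,2), λ > 0, t > 0 and a probability measure Q on (0,∞), and let γ = 1 + ⌊α/p⌋. Then ∫_0^∞ ( ℓ_0(u) − Σ_{n=0}^{γ−1} ℓ_n(u e^{λt}) u^{np} ) u^{−1−α} du ≥ ((e^{pλt}−1)^γ/(γ! p)) Γ(γ − α/p) e^{−λt(pγ−α)} ∫_{(0,∞)} s^{α/p} Q(ds); equivalently, κ ≤ γ! p / ( (e^{pλt}−1)^γ Γ(γ − α/p) e^{−λt(pγ−α)} ∫_{(0,∞)} s^{α/p} Q(ds) ). -/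
open MeasureTheory

section helpers

lemma pow_div_factorial_le_exp {x : ℝ} (hx : 0 ≤ x) (n : ℕ) :
    x ^ n / n.factorial ≤ Real.exp x := by
  refine le_trans ?_ (Real.sum_le_exp_of_nonneg hx (n + 1))
  refine Finset.single_le_sum (f := fun i => x ^ i / i.factorial) ?_ (Finset.self_mem_range_succ n)
  intro i _
  positivity

lemma exp_tail_lb (γ : ℕ) {x : ℝ} (hx : 0 ≤ x) :
    x ^ γ / γ.factorial ≤ Real.exp x - ∑ n ∈ Finset.range γ, x ^ n / n.factorial := by
  have h := Real.sum_le_exp_of_nonneg hx (γ + 1)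
  rw [Finset.sum_range_succ] at h
  linarith

lemma exp_tail_ub (γ : ℕ) {x : ℝ} (hx : 0 ≤ x) :
    Real.exp x - ∑ n ∈ Finset.range γ, x ^ n / n.factorial
      ≤ x ^ γ / γ.factorial * Real.exp x := by
  have hsum : Summable (fun n => x ^ n / n.factorial : ℕ → ℝ) := Real.summable_pow_div_factorial x
  have hexp : Real.exp x = ∑' n : ℕ, x ^ n / n.factorial := by
    rw [Real.exp_eq_exp_ℝ, NormedSpace.exp_eq_tsum_div]
  have key : Real.exp x - ∑ n ∈ Finset.range γ, x ^ n / n.factorial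
      = ∑' k : ℕ, x ^ (k + γ) / (k + γ).factorial := by
    rw [hexp, ← Summable.sum_add_tsum_nat_add γ hsum]
    ring
  rw [key]
  have hsum1 : Summable (fun k => x ^ (k + γ) / (k + γ).factorial : ℕ → ℝ) :=
    (summable_nat_add_iff γ).mpr hsum
  have hsum2 : Summable (fun k => x ^ γ / γ.factorial * (x ^ k / k.factorial) : ℕ → ℝ) :=
    hsum.mul_left _
  have h1 : ∀ k : ℕ, x ^ (k + γ) / (k + γ).factorial
      ≤ x ^ γ / γ.factorial * (x ^ k / k.factorial) := by
    intro k
    have hfac : ((γ.factorial * k.factorial : ℕ) : ℝ) ≤ ((k + γ).factorial : ℝ) := by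
      exact_mod_cast Nat.le_of_dvd (Nat.factorial_pos _)
        (by simpa [Nat.add_comm] using Nat.factorial_mul_factorial_dvd_factorial_add γ k)
    have h2 : x ^ (k + γ) / ((k + γ).factorial : ℝ)
        ≤ x ^ (k + γ) / ((γ.factorial * k.factorial : ℕ) : ℝ) := by
      apply div_le_div_of_nonneg_left (by positivity) ?_ hfac
      exact_mod_cast Nat.pos_of_ne_zero (by positivity)
    refine h2.trans_eq ?_
    rw [pow_add]
    push_cast
    field_simp
  calc ∑' k : ℕ, x ^ (k + γ) / (k + γ).factorial
      ≤ ∑' k : ℕ, x ^ γ / γ.factorial * (x ^ k / k.factorial) := Summable.tsum_le_tsum h1 hsum1 hsum2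
    _ = x ^ γ / γ.factorial * Real.exp x := by rw [tsum_mul_left, ← hexp]

lemma int_gamma {p q b : ℝ} (hp : 0 < p) (hq : 0 < q) (hb : 0 < b) :
    IntegrableOn (fun u : ℝ => u ^ (p * q - 1) * Real.exp (-(b * u ^ p))) (Set.Ioi 0) ∧
    ∫ u in Set.Ioi (0:ℝ), u ^ (p * q - 1) * Real.exp (-(b * u ^ p))
      = (1 / p) * ((1 / b) ^ q * Real.Gamma q) := by
  set g : ℝ → ℝ := fun y => y ^ (q - 1) * Real.exp (-(b * y)) with hg
  have hgint : IntegrableOn g (Set.Ioi 0) := by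
    have h0 : IntegrableOn (fun x : ℝ => Real.exp (-x) * x ^ (q - 1)) (Set.Ioi 0) :=
      Real.GammaIntegral_convergent hq
    have h1 : IntegrableOn (fun x : ℝ => Real.exp (-(b * x)) * (b * x) ^ (q - 1)) (Set.Ioi 0) := by
      have := (integrableOn_Ioi_comp_mul_left_iff
        (fun x : ℝ => Real.exp (-x) * x ^ (q - 1)) 0 hb).mpr (by simpa using h0)
      simpa using this
    have h2 : IntegrableOn (fun x : ℝ => b ^ (q-1) * (x ^ (q - 1) * Real.exp (-(b * x))))
        (Set.Ioi 0) := by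
      refine h1.congr_fun (fun x hx => ?_) measurableSet_Ioi
      dsimp only
      rw [Real.mul_rpow hb.le (le_of_lt hx)]
      ring
    have h3 : IntegrableOn
        (fun x : ℝ => (b ^ (q-1) : ℝ)⁻¹ * (b ^ (q-1) * (x ^ (q - 1) * Real.exp (-(b * x)))))
        (Set.Ioi 0) := h2.const_mul _
    refine h3.congr_fun (fun x hx => ?_) measurableSet_Ioi
    simp only [hg]
    rw [← mul_assoc, inv_mul_cancel₀ (by positivity), one_mul]
  have heq : ∀ x ∈ Set.Ioi (0:ℝ),
      x ^ (p - 1) * g (x ^ p) = x ^ (p * q - 1) * Real.exp (-(b * x ^ p)) := by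
    intro x hx
    have hx0 : (0:ℝ) < x := hx
    simp only [hg]
    rw [← Real.rpow_mul hx0.le, ← mul_assoc, ← Real.rpow_add hx0,
      show p - 1 + p * (q - 1) = p * q - 1 by ring]
  constructor
  · have h := (integrableOn_Ioi_comp_rpow_iff' g hp.ne').mpr hgint
    refine h.congr_fun (fun x hx => ?_) measurableSet_Ioi
    dsimp only
    rw [smul_eq_mul] at *
    exact heq x hx
  · have hi := integral_comp_rpow_Ioi_of_pos (g := g) hp
    have hR : ∫ y in Set.Ioi (0:ℝ), g y = (1 / b) ^ q * Real.Gamma q := by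
      simpa [hg] using Real.integral_rpow_mul_exp_neg_mul_Ioi hq hb
    have hL : ∫ x in Set.Ioi (0:ℝ), (p * x ^ (p - 1)) • g (x ^ p)
        = p * ∫ u in Set.Ioi (0:ℝ), u ^ (p * q - 1) * Real.exp (-(b * u ^ p)) := by
      rw [← integral_const_mul]
      refine setIntegral_congr_fun measurableSet_Ioi (fun x hx => ?_)
      rw [smul_eq_mul, mul_assoc, heq x hx]
    rw [hL, hR] at hi
    rw [← hi]
    field_simp

lemma int_exp_pow {ν : Measure ℝ} [IsFiniteMeasure ν] (hν : ∀ᵐ s ∂ν, 0 < s)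
    {b : ℝ} (hb : 0 < b) (n : ℕ) :
    Integrable (fun s => Real.exp (-(b * s)) * s ^ n) ν := by
  refine Integrable.mono' (integrable_const ((n.factorial : ℝ) / b ^ n)) ?_ ?_
  · exact (((Real.measurable_exp.comp ((measurable_const.mul measurable_id).neg)).mul
      (measurable_id.pow_const n))).aestronglyMeasurable
  · filter_upwards [hν] with s hs
    rw [Real.norm_eq_abs, abs_of_nonneg (by positivity), le_div_iff₀ (by positivity)]
    have h1 : (b * s) ^ n ≤ (n.factorial : ℝ) * Real.exp (b * s) := by
      have h := pow_div_factorial_le_exp (by positivity : (0:ℝ) ≤ b * s) n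
      rw [div_le_iff₀ (by positivity)] at h
      linarith
    calc Real.exp (-(b * s)) * s ^ n * b ^ n = (b * s) ^ n * Real.exp (-(b * s)) := by
          rw [mul_pow]; ring
      _ ≤ (n.factorial : ℝ) * Real.exp (b * s) * Real.exp (-(b * s)) :=
          mul_le_mul_of_nonneg_right h1 (Real.exp_pos _).le
      _ = n.factorial := by rw [mul_assoc, ← Real.exp_add]; simp

end helpers

/-- Fix p > 0, α ∈ (0,2), λ > 0, t > 0 and a probability measure Q on
(0,∞), and let γ = 1 + ⌊α/p⌋. With ℓ_n(u) = (1/n!)(e^{pλt}−1)^n ∫_{(0,∞)} e^{−u^p s} s^n Q(ds)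
and κ = (∫_0^∞ (ℓ_0(u) − Σ_{n<γ} ℓ_n(u e^{λt}) u^{np}) u^{−1−α} du)⁻¹, we have
∫_0^∞ (ℓ_0(u) − Σ_{n<γ} ℓ_n(u e^{λt}) u^{np}) u^{−1−α} du
≥ ((e^{pλt}−1)^γ/(γ! p)) Γ(γ − α/p) e^{−λt(pγ−α)} ∫ s^{α/p} Q(ds), and equivalently
κ ≤ γ! p / ((e^{pλt}−1)^γ Γ(γ − α/p) e^{−λt(pγ−α)} ∫ s^{α/p} Q(ds)). -/
theorem kappa_upper_bound
    (p α lam t : ℝ) (hp : 0 < p) (hα : α ∈ Set.Ioo (0:ℝ) 2) (hlam : 0 < lam) (ht : 0 < t)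
    (Q : Measure ℝ) [IsProbabilityMeasure Q] (hQ : Q (Set.Ioi (0:ℝ))ᶜ = 0)
    (γ : ℕ) (hγ : γ = 1 + ⌊α / p⌋₊)
    (ell : ℕ → ℝ → ℝ)
    (hell : ∀ n u, ell n u = (1 / (n.factorial : ℝ)) * (Real.exp (p * lam * t) - 1) ^ n *
      ∫ s in Set.Ioi (0:ℝ), Real.exp (-(u ^ p * s)) * s ^ n ∂Q)
    (κ : ℝ)
    (hκ : κ = (∫ u in Set.Ioi (0:ℝ),
        (ell 0 u - ∑ n ∈ Finset.range γ, ell n (u * Real.exp (lam * t)) * u ^ ((n : ℝ) * p)) *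
          u ^ (-1 - α))⁻¹) :
    (∫ u in Set.Ioi (0:ℝ),
        (ell 0 u - ∑ n ∈ Finset.range γ, ell n (u * Real.exp (lam * t)) * u ^ ((n : ℝ) * p)) *
          u ^ (-1 - α))
      ≥ ((Real.exp (p * lam * t) - 1) ^ γ / ((γ.factorial : ℝ) * p)) *
          Real.Gamma ((γ : ℝ) - α / p) * Real.exp (-(lam * t * (p * γ - α))) *
          (∫ s in Set.Ioi (0:ℝ), s ^ (α / p) ∂Q)
    ∧ κ ≤ ((γ.factorial : ℝ) * p) /
        ((Real.exp (p * lam * t) - 1) ^ γ * Real.Gamma ((γ : ℝ) - α / p) *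
          Real.exp (-(lam * t * (p * γ - α))) * (∫ s in Set.Ioi (0:ℝ), s ^ (α / p) ∂Q)) := by
  obtain ⟨hα0, hα2⟩ := hα
  have hc1 : 1 < Real.exp (p * lam * t) := Real.one_lt_exp_iff.mpr (by positivity)
  set c : ℝ := Real.exp (p * lam * t) with hcdef
  have hc0 : 0 < c := lt_trans one_pos hc1
  have hcm : 0 < c - 1 := by linarith
  set q : ℝ := (γ : ℝ) - α / p with hqdef
  have hq : 0 < q := by
    have h1 : α / p < (⌊α / p⌋₊ : ℝ) + 1 := Nat.lt_floor_add_one _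
    have h2 : ((γ : ℕ) : ℝ) = (⌊α / p⌋₊ : ℝ) + 1 := by rw [hγ]; push_cast; ring
    rw [hqdef, h2]; linarith
  have hpq : p * q = p * γ - α := by rw [hqdef]; field_simp
  have hγq : (γ:ℝ) - q = α / p := by rw [hqdef]; ring
  set μ := Q.restrict (Set.Ioi (0:ℝ)) with hμdef
  haveI : IsProbabilityMeasure μ := by
    constructor
    rw [hμdef, Measure.restrict_apply_univ]
    have h := measure_add_measure_compl (μ := Q) (measurableSet_Ioi (a := (0:ℝ)))
    rw [hQ, add_zero] at h
    rw [h, measure_univ]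
  set vol' := volume.restrict (Set.Ioi (0:ℝ)) with hvol'
  have hsea : ∀ᵐ s ∂μ, s ∈ Set.Ioi (0:ℝ) := ae_restrict_mem measurableSet_Ioi
  have huea : ∀ᵐ u ∂vol', u ∈ Set.Ioi (0:ℝ) := ae_restrict_mem measurableSet_Ioi
  -- the key functions
  set ψ : ℝ → ℝ → ℝ := fun u s => Real.exp (-(u ^ p * s)) -
      ∑ n ∈ Finset.range γ,
        Real.exp (-(c * (u ^ p * s))) * ((c - 1) * (u ^ p * s)) ^ n / n.factorial with hψdef
  set Φ : ℝ → ℝ × ℝ → ℝ := fun d z =>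
      Real.exp (-(d * (z.1 ^ p * z.2))) * ((c - 1) * (z.1 ^ p * z.2)) ^ γ / (γ.factorial : ℝ)
        * z.1 ^ (-1 - α) with hΦdef
  set K : ℝ → ℝ := fun d =>
      (c - 1) ^ γ / (γ.factorial : ℝ) * (1 / p) * Real.Gamma q * (1 / d) ^ q with hKdef
  -- integrability of s-sections of exponential-polynomial type
  have hsec : ∀ b : ℝ, 0 < b → ∀ n : ℕ,
      Integrable (fun s => Real.exp (-(b * s)) * s ^ n) μ := by
    intro b hb n
    exact int_exp_pow hsea hb n
  -- integrability of the summand sections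
  have hsumint : ∀ (u : ℝ), 0 < u → ∀ n : ℕ,
      Integrable (fun s => Real.exp (-(c * (u ^ p * s))) * ((c - 1) * (u ^ p * s)) ^ n
        / (n.factorial : ℝ)) μ := by
    intro u hu n
    have hup : 0 < u ^ p := Real.rpow_pos_of_pos hu p
    have e : (fun s => Real.exp (-(c * (u ^ p * s))) * ((c - 1) * (u ^ p * s)) ^ n
        / (n.factorial : ℝ))
        = fun s => ((c - 1) ^ n * (u ^ p) ^ n / (n.factorial : ℝ)) *
            (Real.exp (-(c * u ^ p * s)) * s ^ n) := by
      funext s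
      rw [mul_pow, mul_pow, mul_assoc c]
      ring
    rw [e]
    exact (hsec (c * u ^ p) (by positivity) n).const_mul _
  -- integrability of the ψ sections
  have hψint : ∀ (u : ℝ), 0 < u → Integrable (fun s => ψ u s) μ := by
    intro u hu
    have hup : 0 < u ^ p := Real.rpow_pos_of_pos hu p
    rw [hψdef]
    apply Integrable.sub
    · have := (hsec (u ^ p) hup 0).const_mul 1
      refine this.congr (Filter.Eventually.of_forall (fun s => ?_))
      simp
    · exact integrable_finset_sum _ (fun n _ => hsumint u hu n)
  -- the basic identity for the integrand
  have hF : ∀ u ∈ Set.Ioi (0:ℝ),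
      ell 0 u - ∑ n ∈ Finset.range γ, ell n (u * Real.exp (lam * t)) * u ^ ((n : ℝ) * p)
        = ∫ s in Set.Ioi (0:ℝ), ψ u s ∂Q := by
    intro u hu
    have hu0 : (0:ℝ) < u := hu
    have hup : 0 < u ^ p := Real.rpow_pos_of_pos hu0 p
    have hEc : (u * Real.exp (lam * t)) ^ p = u ^ p * c := by
      rw [Real.mul_rpow hu0.le (Real.exp_pos _).le, Real.rpow_def_of_pos (Real.exp_pos _),
        Real.log_exp, hcdef, show lam * t * p = p * lam * t by ring]
    have hterm : ∀ n ∈ Finset.range γ,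
        ell n (u * Real.exp (lam * t)) * u ^ ((n : ℝ) * p)
          = ∫ s in Set.Ioi (0:ℝ),
              Real.exp (-(c * (u ^ p * s))) * ((c - 1) * (u ^ p * s)) ^ n
                / (n.factorial : ℝ) ∂Q := by
      intro n _
      rw [hell]
      have hupn : u ^ ((n:ℝ) * p) = (u ^ p) ^ n := by
        rw [mul_comm ((n:ℝ)) p, Real.rpow_mul hu0.le, Real.rpow_natCast]
      have e : (fun s => Real.exp (-(c * (u ^ p * s))) * ((c - 1) * (u ^ p * s)) ^ n
          / (n.factorial : ℝ))
          = fun s => ((1 / (n.factorial : ℝ)) * (c - 1) ^ n * (u ^ p) ^ n) *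
              (Real.exp (-(u ^ p * c * s)) * s ^ n) := by
        funext s
        rw [mul_pow, mul_pow, show c * (u ^ p * s) = u ^ p * c * s by ring]
        ring
      rw [hupn, hEc, e, integral_const_mul]
      ring
    rw [Finset.sum_congr rfl hterm, ← integral_finset_sum _ (fun n _ => hsumint u hu0 n)]
    have h0 : ell 0 u = ∫ s in Set.Ioi (0:ℝ), Real.exp (-(u ^ p * s)) ∂Q := by
      rw [hell]
      simp
      rw [hμdef]
    have h1 : Integrable (fun s => Real.exp (-(u ^ p * s))) μ := by
      have := (hsec (u ^ p) hup 0).const_mul 1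
      refine this.congr (Filter.Eventually.of_forall (fun s => ?_))
      simp
    have h2 : Integrable (fun s => ∑ n ∈ Finset.range γ,
        Real.exp (-(c * (u ^ p * s))) * ((c - 1) * (u ^ p * s)) ^ n / (n.factorial : ℝ)) μ :=
      integrable_finset_sum _ (fun n _ => hsumint u hu0 n)
    rw [h0, ← integral_sub h1 h2]
  -- pointwise sandwich for ψ
  have hψfact : ∀ (u s : ℝ), 0 < u → 0 < s →
      ψ u s = Real.exp (-(c * (u ^ p * s))) *
        (Real.exp ((c - 1) * (u ^ p * s)) -
          ∑ n ∈ Finset.range γ, ((c - 1) * (u ^ p * s)) ^ n / n.factorial) := by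
    intro u s hu hs
    rw [hψdef]
    simp only
    rw [mul_sub, ← Real.exp_add, show -(c * (u ^ p * s)) + (c - 1) * (u ^ p * s)
      = -(u ^ p * s) by ring, Finset.mul_sum]
    congr 1
    refine Finset.sum_congr rfl (fun n _ => ?_)
    rw [mul_div_assoc]
  have hψlb : ∀ (u s : ℝ), 0 < u → 0 < s →
      Real.exp (-(c * (u ^ p * s))) * ((c - 1) * (u ^ p * s)) ^ γ / (γ.factorial : ℝ) ≤ ψ u s := by
    intro u s hu hs
    have hup : 0 < u ^ p := Real.rpow_pos_of_pos hu p
    have hx : (0:ℝ) ≤ (c - 1) * (u ^ p * s) := by positivity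
    rw [hψfact u s hu hs, mul_div_assoc]
    exact mul_le_mul_of_nonneg_left (exp_tail_lb γ hx) (Real.exp_pos _).le
  have hψub : ∀ (u s : ℝ), 0 < u → 0 < s →
      ψ u s ≤ Real.exp (-(u ^ p * s)) * ((c - 1) * (u ^ p * s)) ^ γ / (γ.factorial : ℝ) := by
    intro u s hu hs
    have hup : 0 < u ^ p := Real.rpow_pos_of_pos hu p
    have hx : (0:ℝ) ≤ (c - 1) * (u ^ p * s) := by positivity
    rw [hψfact u s hu hs]
    calc Real.exp (-(c * (u ^ p * s))) *
          (Real.exp ((c - 1) * (u ^ p * s)) -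
            ∑ n ∈ Finset.range γ, ((c - 1) * (u ^ p * s)) ^ n / n.factorial)
        ≤ Real.exp (-(c * (u ^ p * s))) *
            (((c - 1) * (u ^ p * s)) ^ γ / (γ.factorial : ℝ) *
              Real.exp ((c - 1) * (u ^ p * s))) :=
          mul_le_mul_of_nonneg_left (exp_tail_ub γ hx) (Real.exp_pos _).le
      _ = Real.exp (-(u ^ p * s)) * ((c - 1) * (u ^ p * s)) ^ γ / (γ.factorial : ℝ) := by
          rw [show Real.exp (-(c * (u ^ p * s))) *
              (((c - 1) * (u ^ p * s)) ^ γ / (γ.factorial : ℝ) *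
                Real.exp ((c - 1) * (u ^ p * s)))
            = Real.exp (-(c * (u ^ p * s))) * Real.exp ((c - 1) * (u ^ p * s)) *
                ((c - 1) * (u ^ p * s)) ^ γ / (γ.factorial : ℝ) by ring, ← Real.exp_add,
            show -(c * (u ^ p * s)) + (c - 1) * (u ^ p * s) = -(u ^ p * s) by ring]
  -- measurability of Φ
  have hΦmeas : ∀ d : ℝ, Measurable (Φ d) := by
    intro d
    rw [hΦdef]
    fun_prop
  -- nonnegativity of Φ
  have hΦnn : ∀ d : ℝ, ∀ u ∈ Set.Ioi (0:ℝ), ∀ s ∈ Set.Ioi (0:ℝ), 0 ≤ Φ d (u, s) := by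
    intro d u hu s hs
    have hu0 : (0:ℝ) < u := hu
    have hs0 : (0:ℝ) < s := hs
    have hup : 0 < u ^ p := Real.rpow_pos_of_pos hu0 p
    rw [hΦdef]
    simp only
    have h1 : (0:ℝ) ≤ u ^ (-1 - α) := (Real.rpow_pos_of_pos hu0 _).le
    positivity
  -- μ-integrability of the s-sections (bare version, without the u-power factor)
  have hbare : ∀ d : ℝ, 0 < d → ∀ u : ℝ, 0 < u →
      Integrable (fun s => Real.exp (-(d * (u ^ p * s))) * ((c - 1) * (u ^ p * s)) ^ γ
        / (γ.factorial : ℝ)) μ := by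
    intro d hd u hu
    have hup : 0 < u ^ p := Real.rpow_pos_of_pos hu p
    have e : (fun s => Real.exp (-(d * (u ^ p * s))) * ((c - 1) * (u ^ p * s)) ^ γ
        / (γ.factorial : ℝ))
        = fun s => ((c - 1) ^ γ * (u ^ p) ^ γ / (γ.factorial : ℝ)) *
            (Real.exp (-(d * u ^ p * s)) * s ^ γ) := by
      funext s
      rw [mul_pow, mul_pow, mul_assoc d]
      ring
    rw [e]
    exact (hsec (d * u ^ p) (by positivity) γ).const_mul _
  have hgint : ∀ d : ℝ, 0 < d → ∀ u : ℝ, 0 < u → Integrable (fun s => Φ d (u, s)) μ := by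
    intro d hd u hu
    exact (hbare d hd u hu).mul_const (u ^ (-1 - α))
  -- the Gamma-integral computation of u-sections of Φ
  have key : ∀ d : ℝ, 0 < d → ∀ s ∈ Set.Ioi (0:ℝ),
      IntegrableOn (fun u => Φ d (u, s)) (Set.Ioi 0) ∧
      ∫ u in Set.Ioi (0:ℝ), Φ d (u, s) = K d * s ^ (α / p) := by
    intro d hd s hs
    have hs0 : (0:ℝ) < s := hs
    have hb : 0 < d * s := by positivity
    have e : ∀ u ∈ Set.Ioi (0:ℝ), Φ d (u, s)
        = ((c - 1) ^ γ * s ^ γ / (γ.factorial : ℝ)) *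
            (u ^ (p * q - 1) * Real.exp (-(d * s * u ^ p))) := by
      intro u hu
      have hu0 : (0:ℝ) < u := hu
      have h2 : (u ^ p) ^ γ * u ^ (-1 - α) = u ^ (p * q - 1) := by
        rw [← Real.rpow_natCast (u ^ p) γ, ← Real.rpow_mul hu0.le, ← Real.rpow_add hu0,
          show p * (γ:ℝ) + (-1 - α) = p * q - 1 from by rw [hpq]; ring]
      rw [hΦdef]
      simp only
      rw [show -(d * (u ^ p * s)) = -(d * s * u ^ p) by ring, mul_pow, mul_pow, ← h2]
      ring
    obtain ⟨hi, hv⟩ := int_gamma hp hq hb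
    constructor
    · have h6 : IntegrableOn (fun u : ℝ => ((c - 1) ^ γ * s ^ γ / (γ.factorial : ℝ)) *
          (u ^ (p * q - 1) * Real.exp (-(d * s * u ^ p)))) (Set.Ioi 0) := hi.const_mul _
      exact h6.congr_fun (fun u hu => (e u hu).symm) measurableSet_Ioi
    · rw [setIntegral_congr_fun measurableSet_Ioi e, integral_const_mul, hv, hKdef]
      simp only
      have h4 : ((1:ℝ) / (d * s)) ^ q = (1 / d) ^ q * (1 / s) ^ q := by
        rw [show (1:ℝ) / (d * s) = (1 / d) * (1 / s) from by
            rw [one_div, mul_inv, one_div, one_div],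
          Real.mul_rpow (by positivity) (by positivity)]
      have h5 : s ^ γ * (1 / s) ^ q = s ^ (α / p) := by
        rw [one_div, ← Real.rpow_natCast s γ, Real.inv_rpow hs0.le, ← Real.rpow_neg hs0.le,
          ← Real.rpow_add hs0, show (γ:ℝ) + -q = α / p from by rw [← hγq]; ring]
      rw [h4, ← h5]
      ring
  -- the statement integrand
  set Ψ : ℝ → ℝ := fun u =>
      (ell 0 u - ∑ n ∈ Finset.range γ, ell n (u * Real.exp (lam * t)) * u ^ ((n : ℝ) * p)) *
        u ^ (-1 - α) with hΨdef
  -- section integral comparisons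
  have hsandL : ∀ u ∈ Set.Ioi (0:ℝ), (∫ s, Φ c (u, s) ∂μ) ≤ Ψ u := by
    intro u hu
    have hu0 : (0:ℝ) < u := hu
    rw [hΨdef]
    simp only
    rw [hF u hu]
    have e : ∫ s, Φ c (u, s) ∂μ
        = (∫ s, Real.exp (-(c * (u ^ p * s))) * ((c - 1) * (u ^ p * s)) ^ γ
            / (γ.factorial : ℝ) ∂μ) * u ^ (-1 - α) := by
      simp only [hΦdef]
      exact integral_mul_const _ _
    rw [e]
    refine mul_le_mul_of_nonneg_right ?_ (Real.rpow_nonneg hu0.le _)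
    refine integral_mono_ae (hbare c hc0 u hu0) (hψint u hu0) ?_
    filter_upwards [hsea] with s hs
    exact hψlb u s hu0 hs
  have hsandR : ∀ u ∈ Set.Ioi (0:ℝ), Ψ u ≤ ∫ s, Φ 1 (u, s) ∂μ := by
    intro u hu
    have hu0 : (0:ℝ) < u := hu
    rw [hΨdef]
    simp only
    rw [hF u hu]
    have e : ∫ s, Φ 1 (u, s) ∂μ
        = (∫ s, Real.exp (-(1 * (u ^ p * s))) * ((c - 1) * (u ^ p * s)) ^ γ
            / (γ.factorial : ℝ) ∂μ) * u ^ (-1 - α) := by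
      simp only [hΦdef]
      exact integral_mul_const _ _
    rw [e]
    refine mul_le_mul_of_nonneg_right ?_ (Real.rpow_nonneg hu0.le _)
    refine integral_mono_ae (hψint u hu0) (hbare 1 one_pos u hu0) ?_
    filter_upwards [hsea] with s hs
    simpa only [one_mul] using hψub u s hu0 hs
  -- nonnegativity of the section integrals
  have hGnn : ∀ u ∈ Set.Ioi (0:ℝ), 0 ≤ ∫ s, Φ c (u, s) ∂μ := by
    intro u hu
    refine integral_nonneg_of_ae ?_
    filter_upwards [hsea] with s hs
    exact hΦnn c u hu s hs
  have hΨnn : ∀ u ∈ Set.Ioi (0:ℝ), 0 ≤ Ψ u := fun u hu => (hGnn u hu).trans (hsandL u hu)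
  -- measurability
  have hψmeas : Measurable (fun z : ℝ × ℝ => ψ z.1 z.2) := by
    rw [hψdef]
    fun_prop
  have hGaesm : ∀ d : ℝ, AEStronglyMeasurable (fun u => ∫ s, Φ d (u, s) ∂μ) vol' := fun d =>
    ((hΦmeas d).stronglyMeasurable.integral_prod_right').aestronglyMeasurable
  have hΨaesm : AEStronglyMeasurable Ψ vol' := by
    have haux : AEStronglyMeasurable (fun u => (∫ s, ψ u s ∂μ) * u ^ (-1 - α)) vol' := by
      refine AEStronglyMeasurable.mul ?_ ?_
      · exact (hψmeas.stronglyMeasurable.integral_prod_right').aestronglyMeasurable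
      · exact (by fun_prop : Measurable fun u : ℝ => u ^ (-1 - α)).aestronglyMeasurable
    refine haux.congr ?_
    filter_upwards [huea] with u hu
    rw [hΨdef]
    simp only
    rw [hF u hu]
  -- norm identities
  have hnorm1 : ∀ d : ℝ, ∀ u ∈ Set.Ioi (0:ℝ),
      (∫ s, ‖Φ d (u, s)‖ ∂μ) = ∫ s, Φ d (u, s) ∂μ := by
    intro d u hu
    refine integral_congr_ae ?_
    filter_upwards [hsea] with s hs
    exact Real.norm_of_nonneg (hΦnn d u hu s hs)
  have hnorm2 : ∀ d : ℝ, ∀ s ∈ Set.Ioi (0:ℝ),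
      (∫ u, ‖Φ d (u, s)‖ ∂vol') = ∫ u, Φ d (u, s) ∂vol' := by
    intro d s hs
    refine integral_congr_ae ?_
    filter_upwards [huea] with u hu
    exact Real.norm_of_nonneg (hΦnn d u hu s hs)
  -- positivity of the constant K c
  have hΓpos : 0 < Real.Gamma q := Real.Gamma_pos_of_pos hq
  have hKcpos : 0 < K c := by
    rw [hKdef]
    simp only
    have h1 : (0:ℝ) < (1 / c) ^ q := Real.rpow_pos_of_pos (by positivity) q
    positivity
  -- the constant identification
  have hKc : K c = (c - 1) ^ γ / ((γ.factorial : ℝ) * p) * Real.Gamma q *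
      Real.exp (-(lam * t * (p * ↑γ - α))) := by
    rw [hKdef]
    simp only
    have h8 : ((1:ℝ) / c) ^ q = Real.exp (-(lam * t * (p * ↑γ - α))) := by
      rw [one_div, Real.inv_rpow hc0.le, ← Real.rpow_neg hc0.le,
        Real.rpow_def_of_pos hc0, hcdef, Real.log_exp, ← hpq]
      congr 1
      ring
    rw [h8]
    ring
  have hQ1 : Q (Set.Ioi (0:ℝ)) = 1 := by
    have h := measure_add_measure_compl (μ := Q) (measurableSet_Ioi (a := (0:ℝ)))
    rw [hQ, add_zero] at h
    rw [h, measure_univ]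
  by_cases hInt : Integrable (fun s : ℝ => s ^ (α / p)) μ
  · -- integrable case
    have hprod : ∀ d : ℝ, 0 < d →
        Integrable (fun z : ℝ × ℝ => Φ d (z.2, z.1)) (μ.prod vol') := by
      intro d hd
      refine (integrable_prod_iff
        (((hΦmeas d).comp measurable_swap).aestronglyMeasurable)).mpr ⟨?_, ?_⟩
      · filter_upwards [hsea] with s hs
        exact (key d hd s hs).1
      · refine (hInt.const_mul (K d)).congr ?_
        filter_upwards [hsea] with s hs
        rw [← (key d hd s hs).2, ← hnorm2 d s hs]
        rfl
    have hswap : ∀ d : ℝ, 0 < d → Integrable (Φ d) (vol'.prod μ) := by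
      intro d hd
      exact (hprod d hd).swap
    have hGint : ∀ d : ℝ, 0 < d →
        Integrable (fun u => ∫ s, Φ d (u, s) ∂μ) vol' := by
      intro d hd
      exact (hswap d hd).integral_prod_left
    have hGval : ∀ d : ℝ, 0 < d →
        ∫ u, (∫ s, Φ d (u, s) ∂μ) ∂vol' = K d * ∫ s, s ^ (α / p) ∂μ := by
      intro d hd
      have hsw := integral_integral_swap (f := fun s u => Φ d (u, s)) (hprod d hd)
      rw [← hsw]
      have h7 : ∫ s, (∫ u, Φ d (u, s) ∂vol') ∂μ = ∫ s, K d * s ^ (α / p) ∂μ := by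
        refine integral_congr_ae ?_
        filter_upwards [hsea] with s hs
        exact (key d hd s hs).2
      rw [h7, integral_const_mul]
    have hΨint : Integrable Ψ vol' := by
      refine (hGint 1 one_pos).mono' hΨaesm ?_
      filter_upwards [huea] with u hu
      rw [Real.norm_of_nonneg (hΨnn u hu)]
      exact hsandR u hu
    have hIlow : K c * (∫ s, s ^ (α / p) ∂μ) ≤ ∫ u, Ψ u ∂vol' := by
      rw [← hGval c hc0]
      refine integral_mono_ae (hGint c hc0) hΨint ?_
      filter_upwards [huea] with u hu
      exact hsandL u hu
    have hSpos : 0 < ∫ s, s ^ (α / p) ∂μ := by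
      rw [hμdef]
      refine (setIntegral_pos_iff_support_of_nonneg_ae ?_ ?_).mpr ?_
      · filter_upwards [hsea] with s hs
        exact (Real.rpow_pos_of_pos hs _).le
      · exact hInt
      · have hsub : Set.Ioi (0:ℝ) ⊆ Function.support (fun s : ℝ => s ^ (α / p)) := by
          intro x hx
          exact (Real.rpow_pos_of_pos hx _).ne'
        rw [Set.inter_eq_right.mpr hsub, hQ1]
        exact one_pos
    constructor
    · rw [ge_iff_le, ← hKc]
      exact hIlow
    · rw [hκ]
      have hRpos : 0 < K c * ∫ s, s ^ (α / p) ∂μ := mul_pos hKcpos hSpos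
      have h9 := one_div_le_one_div_of_le hRpos hIlow
      rw [one_div, one_div] at h9
      refine h9.trans_eq ?_
      rw [show K c * ∫ s, s ^ (α / p) ∂μ
          = ((c - 1) ^ γ * Real.Gamma q * Real.exp (-(lam * t * (p * ↑γ - α))) *
              ∫ s, s ^ (α / p) ∂μ) / ((γ.factorial : ℝ) * p) from by rw [hKc]; ring,
        inv_div]
  · -- non-integrable case
    have hS0 : ∫ s, (s:ℝ) ^ (α / p) ∂μ = 0 := integral_undef hInt
    have hnone : ¬ Integrable Ψ vol' := by
      intro hcon
      have hGc : Integrable (fun u => ∫ s, Φ c (u, s) ∂μ) vol' := by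
        refine hcon.mono' (hGaesm c) ?_
        filter_upwards [huea] with u hu
        rw [Real.norm_of_nonneg (hGnn u hu)]
        exact hsandL u hu
      have hprodc : Integrable (Φ c) (vol'.prod μ) := by
        refine (integrable_prod_iff (hΦmeas c).aestronglyMeasurable).mpr ⟨?_, ?_⟩
        · filter_upwards [huea] with u hu
          exact hgint c hc0 u hu
        · refine hGc.congr ?_
          filter_upwards [huea] with u hu
          exact (hnorm1 c u hu).symm
      have hprodc' : Integrable (fun z : ℝ × ℝ => Φ c (z.2, z.1)) (μ.prod vol') :=
        hprodc.swap
      have h10 := ((integrable_prod_iff hprodc'.aestronglyMeasurable).mp hprodc').2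
      have h11 : Integrable (fun s : ℝ => K c * s ^ (α / p)) μ := by
        refine h10.congr ?_
        filter_upwards [hsea] with s hs
        exact (hnorm2 c s hs).trans ((key c hc0 s hs).2)
      have h12 : Integrable (fun s : ℝ => s ^ (α / p)) μ := by
        have h13 := h11.const_mul (K c)⁻¹
        refine h13.congr (Filter.Eventually.of_forall (fun s => ?_))
        simp only []
        rw [← mul_assoc, inv_mul_cancel₀ hKcpos.ne', one_mul]
      exact hInt h12
    have hI0 : ∫ u, Ψ u ∂vol' = 0 := integral_undef hnone
    constructor
    · rw [ge_iff_le, hS0, mul_zero, hI0]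
    · rw [hκ, hI0, inv_zero, hS0, mul_zero, div_zero]
end

section
/- Fix p > 0, α ∈ (0,2) and λ > 0, let Q be a probability measure on (0,∞) with ∫_{(0,∞)} s^γ Q(ds) < ∞ where γ = 1 + ⌊α/p⌋, and regard κ = κ(t), C_γ = C_γ(t), V₂′ = V₂′(t) and V₂ = V₂(t) = κ(t) · (γp/(α(γp−α))) · V₂′(t) as functions of t > 0. Then limsup_{t → 0⁺} V₂(t) ≤ ( max{ e^{−γ} γ^γ, ∫_{(0,∞)} s^γ Q(ds) } / ( Γ(γ − α/p) ∫_{(0,∞)} s^{α/p} Q(ds) ) ) · ( γ p² / (α(γp − α)) ). -/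
open MeasureTheory Filter Set Real
set_option maxHeartbeats 1000000

private lemma pow_le_one_add_pow {s : ℝ} (hs : 0 < s) {n γ : ℕ} (hn : n ≤ γ) :
    s ^ n ≤ 1 + s ^ γ := by
  rcases le_total s 1 with h | h
  · have h1 : s ^ n ≤ 1 := pow_le_one₀ hs.le h
    nlinarith [pow_nonneg hs.le γ]
  · have h1 : s ^ n ≤ s ^ γ := pow_le_pow_right₀ h hn
    nlinarith

private lemma int_exp_pow_s16 (Q : Measure ℝ) [IsFiniteMeasure Q] {γ : ℕ}
    (hmom : IntegrableOn (fun s => s ^ γ) (Set.Ioi 0) Q)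
    {n : ℕ} (hn : n ≤ γ) {c : ℝ} (hc : 0 ≤ c) :
    IntegrableOn (fun s => Real.exp (-(c * s)) * s ^ n) (Set.Ioi 0) Q := by
  have hint : IntegrableOn (fun s : ℝ => 1 + s ^ γ) (Set.Ioi 0) Q :=
    (integrableOn_const (C := (1:ℝ)) (measure_ne_top _ _)).add hmom
  refine hint.mono' (Continuous.aestronglyMeasurable (by continuity)) ?_
  refine (ae_restrict_iff' measurableSet_Ioi).mpr (Filter.Eventually.of_forall fun s hs => ?_)
  have hs0 : (0:ℝ) < s := hs
  simp only [Real.norm_eq_abs]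
  rw [abs_of_nonneg (by positivity)]
  calc Real.exp (-(c * s)) * s ^ n ≤ 1 * s ^ n :=
        mul_le_mul_of_nonneg_right (Real.exp_le_one_iff.mpr (by nlinarith)) (by positivity)
    _ = s ^ n := one_mul _
    _ ≤ 1 + s ^ γ := pow_le_one_add_pow hs0 hn

private lemma int_rpow (Q : Measure ℝ) [IsFiniteMeasure Q] {γ : ℕ}
    (hmom : IntegrableOn (fun s => s ^ γ) (Set.Ioi 0) Q)
    {β : ℝ} (hβ0 : 0 ≤ β) (hβ : β ≤ γ) :
    IntegrableOn (fun s => s ^ β) (Set.Ioi 0) Q := by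
  have hint : IntegrableOn (fun s : ℝ => 1 + s ^ γ) (Set.Ioi 0) Q :=
    (integrableOn_const (C := (1:ℝ)) (measure_ne_top _ _)).add hmom
  refine hint.mono' ?_ ?_
  · exact (measurable_id.pow_const β).aestronglyMeasurable
  refine (ae_restrict_iff' measurableSet_Ioi).mpr (Filter.Eventually.of_forall fun s hs => ?_)
  have hs0 : (0:ℝ) < s := hs.out
  simp only [Real.norm_eq_abs]
  rw [abs_of_nonneg (Real.rpow_nonneg hs0.le _)]
  rcases le_total s 1 with h | h
  · have := Real.rpow_le_one hs0.le h hβ0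
    nlinarith [pow_nonneg hs0.le γ]
  · have h1 : s ^ β ≤ s ^ (γ:ℝ) := Real.rpow_le_rpow_of_exponent_le h hβ
    rw [Real.rpow_natCast] at h1
    nlinarith


private lemma exp_tail {y : ℝ} (hy : 0 ≤ y) (γ : ℕ) :
    y ^ γ / (γ.factorial : ℝ) + ∑ n ∈ Finset.range γ, y ^ n / (n.factorial : ℝ)
      ≤ Real.exp y := by
  have h := Real.sum_le_exp_of_nonneg hy (γ + 1)
  rwa [Finset.sum_range_succ, add_comm] at h

private lemma pow_mul_exp_le {γ : ℕ} (hγ : 1 ≤ γ) {c s : ℝ} (hc : 0 < c) (hs : 0 ≤ s) :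
    s ^ γ * Real.exp (-(c * s)) ≤ ((γ : ℝ) / c) ^ γ * Real.exp (-(γ : ℝ)) := by
  have hγ0 : (0:ℝ) < (γ:ℝ) := by exact_mod_cast Nat.lt_of_lt_of_le Nat.zero_lt_one hγ
  rcases eq_or_lt_of_le hs with rfl | hs0
  · rw [zero_pow (by omega : γ ≠ 0)]
    have : (0:ℝ) < ((γ : ℝ) / c) ^ γ * Real.exp (-(γ : ℝ)) := by positivity
    linarith
  · have hx : (0:ℝ) < c * s / γ := by positivity
    have hlog := Real.log_le_sub_one_of_pos hx
    have h2 : (c * s / γ) ^ γ ≤ Real.exp (c * s - γ) := by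
      have h3 : (c * s / γ) ^ γ = Real.exp ((γ : ℝ) * Real.log (c * s / γ)) := by
        rw [← Real.rpow_natCast (c * s / γ) γ, Real.rpow_def_of_pos hx, mul_comm]
      rw [h3]
      apply Real.exp_le_exp.mpr
      have hmul := mul_le_mul_of_nonneg_left hlog hγ0.le
      have hfld : (γ:ℝ) * (c * s / γ - 1) = c * s - γ := by field_simp
      linarith
    have hsplit : s ^ γ = (c * s / γ) ^ γ * ((γ : ℝ) / c) ^ γ := by
      rw [← mul_pow]
      congr 1
      field_simp
    calc s ^ γ * Real.exp (-(c * s))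
        = (c * s / γ) ^ γ * Real.exp (-(c * s)) * ((γ : ℝ) / c) ^ γ := by rw [hsplit]; ring
      _ ≤ Real.exp (c * s - γ) * Real.exp (-(c * s)) * ((γ : ℝ) / c) ^ γ := by
          have hp1 : (0:ℝ) ≤ Real.exp (-(c * s)) := (Real.exp_pos _).le
          have hp2 : (0:ℝ) ≤ ((γ : ℝ) / c) ^ γ := by positivity
          exact mul_le_mul_of_nonneg_right (mul_le_mul_of_nonneg_right h2 hp1) hp2
      _ = ((γ : ℝ) / c) ^ γ * Real.exp (-(γ : ℝ)) := by
          rw [← Real.exp_add]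
          ring_nf

/-- Fix p > 0, α ∈ (0,2), λ > 0 and a probability measure Q on (0,∞) with
∫ s^γ Q(ds) < ∞, where γ = 1 + ⌊α/p⌋. Regarding κ, C_γ, V₂′ and
V₂ = κ (γp/(α(γp−α))) V₂′ as functions of t > 0, we have
limsup_{t→0⁺} V₂(t) ≤ (max{e^{−γ} γ^γ, ∫ s^γ Q(ds)} / (Γ(γ − α/p) ∫ s^{α/p} Q(ds)))
· (γ p² / (α(γp − α))). -/
theorem limsup_V2_bound
    (p α lam : ℝ) (hp : 0 < p) (hα : α ∈ Set.Ioo (0:ℝ) 2) (hlam : 0 < lam)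
    (Q : Measure ℝ) [IsProbabilityMeasure Q] (hQ : Q (Set.Ioi (0:ℝ))ᶜ = 0)
    (γ : ℕ) (hγ : γ = 1 + ⌊α / p⌋₊)
    (hmom : IntegrableOn (fun s => s ^ γ) (Set.Ioi 0) Q)
    (ell : ℝ → ℕ → ℝ → ℝ)
    (hell : ∀ t > (0:ℝ), ∀ n u, ell t n u =
      (1 / (n.factorial : ℝ)) * (Real.exp (p * lam * t) - 1) ^ n *
        ∫ s in Set.Ioi (0:ℝ), Real.exp (-(u ^ p * s)) * s ^ n ∂Q)
    (κ Cγ V₂' V₂ : ℝ → ℝ)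
    (hκ : ∀ t > (0:ℝ), κ t = (∫ u in Set.Ioi (0:ℝ),
        (ell t 0 u -
            ∑ n ∈ Finset.range γ, ell t n (u * Real.exp (lam * t)) * u ^ ((n : ℝ) * p)) *
          u ^ (-1 - α))⁻¹)
    (hC : ∀ t > (0:ℝ), Cγ t = ((Real.exp (lam * t * p) - 1) ^ γ / (γ.factorial : ℝ)) *
        ∫ s in Set.Ioi (0:ℝ), s ^ γ ∂Q)
    (hV₂' : ∀ t > (0:ℝ), V₂' t =
        max (min 1 (Real.exp (-(γ : ℝ)) * (γ : ℝ) ^ γ *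
          (Real.exp (p * lam * t) - 1) ^ γ / (γ.factorial : ℝ))) (Cγ t))
    (hV₂ : ∀ t > (0:ℝ), V₂ t = κ t * (((γ : ℝ) * p) / (α * ((γ : ℝ) * p - α))) * V₂' t) :
    Filter.limsup V₂ (nhdsWithin 0 (Set.Ioi 0))
      ≤ (max (Real.exp (-(γ : ℝ)) * (γ : ℝ) ^ γ) (∫ s in Set.Ioi (0:ℝ), s ^ γ ∂Q) /
          (Real.Gamma ((γ : ℝ) - α / p) * ∫ s in Set.Ioi (0:ℝ), s ^ (α / p) ∂Q)) *
        (((γ : ℝ) * p ^ 2) / (α * ((γ : ℝ) * p - α))) := by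
  obtain ⟨hα0, hα2⟩ := hα
  have hγ1 : 1 ≤ γ := by omega
  have hγ0 : (0:ℝ) < γ := by exact_mod_cast Nat.lt_of_lt_of_le Nat.zero_lt_one hγ1
  have hap : α / p < (γ:ℝ) := by
    rw [hγ]; push_cast; have := Nat.lt_floor_add_one (α/p); linarith
  have hγpα : (0:ℝ) < (γ:ℝ) * p - α := by
    have h1 : α < (γ:ℝ) * p := by
      have := (div_lt_iff₀ hp).mp hap; linarith [mul_comm (γ:ℝ) p]
    linarith
  have hQpos : Q (Set.Ioi (0:ℝ)) = 1 := by
    have := measure_add_measure_compl (μ := Q) (measurableSet_Ioi (a := (0:ℝ)))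
    rw [hQ, add_zero] at this; simpa using this
  have hap0 : 0 ≤ α / p := le_of_lt (div_pos hα0 hp)
  have hSint : IntegrableOn (fun s => s ^ (α/p)) (Set.Ioi 0) Q :=
    int_rpow Q hmom hap0 hap.le
  have hS : 0 < ∫ s in Set.Ioi (0:ℝ), s ^ (α/p) ∂Q := by
    have hnn : 0 ≤ᵐ[Q.restrict (Set.Ioi 0)] fun s : ℝ => s ^ (α/p) :=
      (ae_restrict_iff' measurableSet_Ioi).mpr
        (Filter.Eventually.of_forall fun s hs => Real.rpow_nonneg (le_of_lt hs) _)
    rw [setIntegral_pos_iff_support_of_nonneg_ae hnn hSint]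
    have hsub : Set.Ioi (0:ℝ) ⊆ Function.support (fun s : ℝ => s ^ (α/p)) ∩ Set.Ioi 0 := by
      intro s hs
      have hs0 : (0:ℝ) < s := hs
      refine ⟨?_, hs⟩
      simp only [Function.mem_support]
      positivity
    calc (0:ENNReal) < 1 := by norm_num
      _ = Q (Set.Ioi 0) := hQpos.symm
      _ ≤ _ := measure_mono hsub
  have hQγ : 0 ≤ ∫ s in Set.Ioi (0:ℝ), s ^ γ ∂Q := by
    refine setIntegral_nonneg measurableSet_Ioi fun s hs => ?_
    exact pow_nonneg (le_of_lt hs) γ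
  have hG0 : 0 < Real.Gamma ((γ:ℝ) - α/p) := Real.Gamma_pos_of_pos (by linarith)
  set M : ℝ := max (Real.exp (-(γ : ℝ)) * (γ : ℝ) ^ γ) (∫ s in Set.Ioi (0:ℝ), s ^ γ ∂Q) with hMdef
  have hM : 0 < M := lt_max_of_lt_left (by positivity)
  set S : ℝ := ∫ s in Set.Ioi (0:ℝ), s ^ (α/p) ∂Q
  set R : ℝ := (M / (Real.Gamma ((γ : ℝ) - α / p) * S)) *
        (((γ : ℝ) * p ^ 2) / (α * ((γ : ℝ) * p - α))) with hRdef
  have hR0 : 0 < R := by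
    apply mul_pos (div_pos hM (mul_pos hG0 hS))
    apply div_pos (by positivity) (by positivity)
  have key : ∀ t ∈ Set.Ioi (0:ℝ),
      0 ≤ V₂ t ∧ V₂ t ≤ R * Real.exp (lam * t * ((γ:ℝ)*p - α)) := by
    intro t ht
    have ht' : (0:ℝ) < t := ht
    have hE1 : (1:ℝ) < Real.exp (p * lam * t) := by
      rw [show (1:ℝ) = Real.exp 0 from (Real.exp_zero).symm]
      exact Real.exp_lt_exp.mpr (by positivity)
    set E : ℝ := Real.exp (p * lam * t) with hEdef
    have hE0 : (0:ℝ) < E := Real.exp_pos _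
    set X : ℝ := E - 1 with hXdef
    have hX : (0:ℝ) < X := sub_pos.mpr hE1
    have hfac : (0:ℝ) < (γ.factorial : ℝ) := by exact_mod_cast γ.factorial_pos
    haveI hQprob : IsProbabilityMeasure (Q.restrict (Set.Ioi (0:ℝ))) :=
      ⟨by rw [Measure.restrict_apply_univ, hQpos]⟩
    have hup : ∀ u : ℝ, 0 < u → ∀ s : ℝ, (u * Real.exp (lam * t)) ^ p * s = E * u ^ p * s := by
      intro u hu s
      rw [Real.mul_rpow hu.le (Real.exp_pos _).le, ← Real.exp_mul, hEdef,
        show lam * t * p = p * lam * t from by ring]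
      ring
    have hupow : ∀ u : ℝ, 0 < u → ∀ n : ℕ, u ^ ((n:ℝ) * p) = (u ^ p) ^ n := by
      intro u hu n
      rw [mul_comm, Real.rpow_mul hu.le, Real.rpow_natCast]
    have hcE : ∀ u : ℝ, 0 < u → (0:ℝ) ≤ E * u ^ p := by
      intro u hu
      have := Real.rpow_nonneg hu.le p
      positivity
    have hint1 : ∀ (c : ℝ), 0 ≤ c →
        IntegrableOn (fun s => Real.exp (-(c * s))) (Set.Ioi 0) Q := by
      intro c hc
      have h := int_exp_pow_s16 Q hmom (Nat.zero_le γ) hc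
      simpa using h
    set Jf : ℝ → ℝ := fun u => (∫ s in Set.Ioi (0:ℝ),
        (Real.exp (-(u ^ p * s)) - ∑ n ∈ Finset.range γ,
          X ^ n / (n.factorial : ℝ) * (u ^ p) ^ n *
            (Real.exp (-(E * u ^ p * s)) * s ^ n)) ∂Q) * u ^ (-1 - α) with hJfdef
    have hintn : ∀ u : ℝ, 0 < u → ∀ n ∈ Finset.range γ,
        Integrable (fun s => X ^ n / (n.factorial : ℝ) * (u ^ p) ^ n *
          (Real.exp (-(E * u ^ p * s)) * s ^ n)) (Q.restrict (Set.Ioi 0)) := by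
      intro u hu n hn
      exact (int_exp_pow_s16 Q hmom (le_of_lt (Finset.mem_range.mp hn)) (hcE u hu)).const_mul _
    have hκt : κ t = (∫ u in Set.Ioi (0:ℝ), Jf u)⁻¹ := by
      rw [hκ t ht]
      congr 1
      refine setIntegral_congr_fun measurableSet_Ioi fun u hu => ?_
      have hu0 : (0:ℝ) < u := hu
      simp only [hJfdef]
      congr 1
      simp only [hell t ht]
      rw [integral_sub (hint1 (u ^ p) (Real.rpow_nonneg hu0.le p))
        (integrable_finset_sum _ (hintn u hu0)),
        integral_finset_sum _ (hintn u hu0)]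
      congr 1
      · rw [← hEdef]
        simp
      · refine Finset.sum_congr rfl fun n _ => ?_
        rw [integral_const_mul, hupow u hu0 n]
        rw [show (∫ s in Set.Ioi (0:ℝ),
            Real.exp (-((u * Real.exp (lam * t)) ^ p * s)) * s ^ n ∂Q) =
          ∫ s in Set.Ioi (0:ℝ), Real.exp (-(E * u ^ p * s)) * s ^ n ∂Q from
          setIntegral_congr_fun measurableSet_Ioi fun s _ => by rw [hup u hu0 s]]
        rw [← hEdef]
        ring
    -- the double-variable minorant
    set q : ℝ := (γ:ℝ) * p - 1 - α with hqdef
    have hq1 : (-1:ℝ) < q := by rw [hqdef]; linarith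
    set h2 : ℝ → ℝ → ℝ := fun u s => u ^ q * Real.exp (-(E * s) * u ^ p) * s ^ γ with hh2def
    have hmeas : AEStronglyMeasurable (Function.uncurry h2)
        ((volume.restrict (Set.Ioi (0:ℝ))).prod (Q.restrict (Set.Ioi (0:ℝ)))) := by
      apply Measurable.aestronglyMeasurable
      exact ((measurable_fst.pow measurable_const).mul
        (Real.measurable_exp.comp (((measurable_const.mul measurable_snd).neg).mul
          (measurable_fst.pow measurable_const)))).mul (measurable_snd.pow_const γ)
    have hsec : ∀ u : ℝ, 0 < u →
        Integrable (fun s => h2 u s) (Q.restrict (Set.Ioi 0)) := by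
      intro u hu
      have h : IntegrableOn (fun s => u ^ q * (Real.exp (-(E * u ^ p * s)) * s ^ γ))
          (Set.Ioi 0) Q := (int_exp_pow_s16 Q hmom le_rfl (hcE u hu)).const_mul (u ^ q)
      refine IntegrableOn.congr_fun h (fun s _ => ?_) measurableSet_Ioi
      simp only [hh2def]
      rw [show -(E * s) * u ^ p = -(E * u ^ p * s) from by ring]
      ring
    have hsec0 : ∀ u : ℝ, 0 < u → ∀ s : ℝ, 0 < s → 0 ≤ h2 u s := by
      intro u hu s hs
      simp only [hh2def]
      have h1 := Real.rpow_nonneg hu.le q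
      have h2' := (Real.exp_pos (-(E * s) * u ^ p)).le
      positivity
    set CA : ℝ := ∫ s in Set.Ioi (0:ℝ), s ^ γ ∂Q with hCAdef
    set CB : ℝ := ((γ:ℝ) / E) ^ γ * Real.exp (-(γ:ℝ)) with hCBdef
    have hCB0 : 0 ≤ CB := by positivity
    have hnorm_bound : ∀ u : ℝ, 0 < u →
        (∫ s in Set.Ioi (0:ℝ), ‖h2 u s‖ ∂Q) ≤ min (CA * u ^ q) (CB * u ^ (-1 - α)) := by
      intro u hu
      have huq : (0:ℝ) ≤ u ^ q := Real.rpow_nonneg hu.le q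
      refine le_min ?_ ?_
      · calc (∫ s in Set.Ioi (0:ℝ), ‖h2 u s‖ ∂Q)
            ≤ ∫ s in Set.Ioi (0:ℝ), u ^ q * s ^ γ ∂Q := by
              refine integral_mono_ae ((hsec u hu).norm) (hmom.const_mul _) ?_
              refine (ae_restrict_iff' measurableSet_Ioi).mpr
                (Filter.Eventually.of_forall fun s hs => ?_)
              have hs0 : (0:ℝ) < s := hs
              simp only [Real.norm_eq_abs]
              rw [abs_of_nonneg (hsec0 u hu s hs0)]
              simp only [hh2def]
              have hexp : Real.exp (-(E * s) * u ^ p) ≤ 1 := by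
                apply Real.exp_le_one_iff.mpr
                nlinarith [mul_nonneg (mul_nonneg hE0.le hs0.le) (Real.rpow_nonneg hu.le p)]
              calc u ^ q * Real.exp (-(E * s) * u ^ p) * s ^ γ
                  ≤ u ^ q * 1 * s ^ γ := by
                    apply mul_le_mul_of_nonneg_right
                      (mul_le_mul_of_nonneg_left hexp huq) (by positivity)
                _ = u ^ q * s ^ γ := by ring
          _ = CA * u ^ q := by rw [integral_const_mul, hCAdef]; ring
      · calc (∫ s in Set.Ioi (0:ℝ), ‖h2 u s‖ ∂Q)
            ≤ ∫ _ in Set.Ioi (0:ℝ), CB * u ^ (-1 - α) ∂Q := by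
              refine integral_mono_ae ((hsec u hu).norm) (integrable_const _) ?_
              refine (ae_restrict_iff' measurableSet_Ioi).mpr
                (Filter.Eventually.of_forall fun s hs => ?_)
              have hs0 : (0:ℝ) < s := hs
              simp only [Real.norm_eq_abs]
              rw [abs_of_nonneg (hsec0 u hu s hs0)]
              simp only [hh2def]
              have hup0 : (0:ℝ) < u ^ p := Real.rpow_pos_of_pos hu p
              have hc : (0:ℝ) < E * u ^ p := by positivity
              have h1 : s ^ γ * Real.exp (-(E * u ^ p * s)) ≤
                  ((γ:ℝ) / (E * u ^ p)) ^ γ * Real.exp (-(γ:ℝ)) :=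
                pow_mul_exp_le hγ1 hc hs0.le
              have hupγ : ((u:ℝ) ^ p) ^ γ = u ^ (p * (γ:ℝ)) := by
                rw [← Real.rpow_natCast (u ^ p) γ, ← Real.rpow_mul hu.le]
              have hqid : u ^ q * (u ^ (p * (γ:ℝ)))⁻¹ = u ^ (-1 - α) := by
                rw [← Real.rpow_neg hu.le, ← Real.rpow_add hu]
                congr 1
                rw [hqdef]; ring
              have hsplitc : ((γ:ℝ) / (E * u ^ p)) ^ γ =
                  ((γ:ℝ) / E) ^ γ * ((u ^ p) ^ γ)⁻¹ := by
                rw [← inv_pow, ← mul_pow]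
                congr 1
                field_simp
              calc u ^ q * Real.exp (-(E * s) * u ^ p) * s ^ γ
                  = u ^ q * (s ^ γ * Real.exp (-(E * u ^ p * s))) := by
                    rw [show -(E * s) * u ^ p = -(E * u ^ p * s) from by ring]; ring
                _ ≤ u ^ q * (((γ:ℝ) / (E * u ^ p)) ^ γ * Real.exp (-(γ:ℝ))) :=
                    mul_le_mul_of_nonneg_left h1 huq
                _ = CB * (u ^ q * (u ^ (p * (γ:ℝ)))⁻¹) := by
                    rw [hsplitc, hupγ, hCBdef]; ring
                _ = CB * u ^ (-1 - α) := by rw [hqid]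
          _ = CB * u ^ (-1 - α) := by
              rw [integral_const]
              simp
    have hBint : IntegrableOn (fun u => min (CA * u ^ q) (CB * u ^ (-1 - α)))
        (Set.Ioi (0:ℝ)) volume := by
      have hBmeas : AEStronglyMeasurable (fun u : ℝ => min (CA * u ^ q) (CB * u ^ (-1 - α)))
          (volume.restrict (Set.Ioi (0:ℝ))) :=
        (((measurable_const.mul (measurable_id.pow measurable_const)).min
          (measurable_const.mul (measurable_id.pow measurable_const)))).aestronglyMeasurable
      have hCA0 : 0 ≤ CA := hQγ
      have h01 : IntegrableOn (fun u => min (CA * u ^ q) (CB * u ^ (-1 - α)))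
          (Set.Ioo (0:ℝ) 1) volume := by
        refine Integrable.mono' (((intervalIntegral.integrableOn_Ioo_rpow_iff one_pos).mpr hq1).const_mul CA)
          (hBmeas.mono_measure (Measure.restrict_mono Set.Ioo_subset_Ioi_self le_rfl)) ?_
        refine (ae_restrict_iff' measurableSet_Ioo).mpr
          (Filter.Eventually.of_forall fun u hu => ?_)
        have hu0 : (0:ℝ) < u := hu.1
        have hm0 : 0 ≤ min (CA * u ^ q) (CB * u ^ (-1 - α)) :=
          le_min (mul_nonneg hCA0 (Real.rpow_nonneg hu0.le _)) (mul_nonneg hCB0 (Real.rpow_nonneg hu0.le _))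
        simp only [Real.norm_eq_abs]
        rw [abs_of_nonneg hm0]
        exact min_le_left _ _
      have h1i : IntegrableOn (fun u => min (CA * u ^ q) (CB * u ^ (-1 - α)))
          (Set.Ici (1:ℝ)) volume := by
        rw [integrableOn_Ici_iff_integrableOn_Ioi]
        refine Integrable.mono'
          (((integrableOn_Ioi_rpow_iff one_pos).mpr (by linarith : (-1 - α) < -1)).const_mul CB)
          (hBmeas.mono_measure (Measure.restrict_mono (Set.Ioi_subset_Ioi zero_le_one) le_rfl)) ?_
        refine (ae_restrict_iff' measurableSet_Ioi).mpr
          (Filter.Eventually.of_forall fun u hu => ?_)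
        have hu0 : (0:ℝ) < u := lt_trans one_pos hu
        have hm0 : 0 ≤ min (CA * u ^ q) (CB * u ^ (-1 - α)) :=
          le_min (mul_nonneg hCA0 (Real.rpow_nonneg hu0.le _)) (mul_nonneg hCB0 (Real.rpow_nonneg hu0.le _))
        simp only [Real.norm_eq_abs]
        rw [abs_of_nonneg hm0]
        exact min_le_right _ _
      rw [← Set.Ioo_union_Ici_eq_Ioi one_pos]
      exact h01.union h1i
    have hprod : Integrable (Function.uncurry h2)
        ((volume.restrict (Set.Ioi (0:ℝ))).prod (Q.restrict (Set.Ioi (0:ℝ)))) := by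
      rw [MeasureTheory.integrable_prod_iff hmeas]
      constructor
      · refine (ae_restrict_iff' measurableSet_Ioi).mpr
          (Filter.Eventually.of_forall fun u hu => ?_)
        exact hsec u hu
      · refine hBint.mono' (hmeas.norm.integral_prod_right') ?_
        refine (ae_restrict_iff' measurableSet_Ioi).mpr
          (Filter.Eventually.of_forall fun u hu => ?_)
        have h0 : (0:ℝ) ≤ ∫ s in Set.Ioi (0:ℝ), ‖h2 u s‖ ∂Q :=
          integral_nonneg fun s => norm_nonneg _
        show ‖∫ s in Set.Ioi (0:ℝ), ‖h2 u s‖ ∂Q‖ ≤ min (CA * u ^ q) (CB * u ^ (-1 - α))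
        rw [Real.norm_eq_abs, abs_of_nonneg h0]
        exact hnorm_bound u hu
    have hI2 : (∫ u in Set.Ioi (0:ℝ), ∫ s in Set.Ioi (0:ℝ), h2 u s ∂Q) =
        (Real.Gamma ((γ:ℝ) - α/p) * (1/p) * E ^ (α/p - (γ:ℝ))) * S := by
      rw [MeasureTheory.integral_integral_swap hprod]
      have hinner : ∀ s ∈ Set.Ioi (0:ℝ), (∫ u in Set.Ioi (0:ℝ), h2 u s) =
          (Real.Gamma ((γ:ℝ) - α/p) * (1/p) * E ^ (α/p - (γ:ℝ))) * s ^ (α/p) := by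
        intro s hs
        have hs0 : (0:ℝ) < s := hs
        have hb : (0:ℝ) < E * s := by positivity
        simp only [hh2def]
        rw [MeasureTheory.integral_mul_const, integral_rpow_mul_exp_neg_mul_rpow hp hq1 hb]
        have hqp : (q + 1) / p = (γ:ℝ) - α/p := by
          rw [hqdef]; field_simp; ring
        have hqm : -(q + 1) / p = α/p - (γ:ℝ) := by
          rw [hqdef]; field_simp; ring
        have hmr : (E * s) ^ (α/p - (γ:ℝ)) = E ^ (α/p - (γ:ℝ)) * s ^ (α/p - (γ:ℝ)) :=
          Real.mul_rpow hE0.le hs0.le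
        have hss : s ^ (α/p - (γ:ℝ)) * s ^ ((γ:ℝ)) = s ^ (α/p) := by
          rw [← Real.rpow_add hs0]
          congr 1
          ring
        have hsn : (s:ℝ) ^ γ = s ^ ((γ:ℝ)) := (Real.rpow_natCast s γ).symm
        rw [hqp, hqm, hsn, hmr, ← hss]
        ring
      rw [setIntegral_congr_fun measurableSet_Ioi hinner, integral_const_mul]
    have hmarg : IntegrableOn (fun u => ∫ s in Set.Ioi (0:ℝ), h2 u s ∂Q)
        (Set.Ioi (0:ℝ)) volume := hprod.integral_prod_left
    -- pointwise minorant of Jf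
    have hpt : ∀ u ∈ Set.Ioi (0:ℝ),
        X ^ γ / (γ.factorial : ℝ) * ∫ s in Set.Ioi (0:ℝ), h2 u s ∂Q ≤ Jf u := by
      intro u hu
      have hu0 : (0:ℝ) < u := hu
      have hum : (0:ℝ) ≤ u ^ (-1 - α) := Real.rpow_nonneg hu0.le _
      have hintmin : Integrable (fun s => X ^ γ / (γ.factorial : ℝ) *
          ((u ^ p) ^ γ * (Real.exp (-(E * u ^ p * s)) * s ^ γ)))
          (Q.restrict (Set.Ioi 0)) :=
        ((int_exp_pow_s16 Q hmom le_rfl (hcE u hu0)).const_mul _).const_mul _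
      have hintdiff : Integrable (fun s => Real.exp (-(u ^ p * s)) -
          ∑ n ∈ Finset.range γ, X ^ n / (n.factorial : ℝ) * (u ^ p) ^ n *
            (Real.exp (-(E * u ^ p * s)) * s ^ n)) (Q.restrict (Set.Ioi 0)) :=
        (hint1 (u ^ p) (Real.rpow_nonneg hu0.le p)).sub
          (integrable_finset_sum _ (hintn u hu0))
      have hptwise : ∀ s ∈ Set.Ioi (0:ℝ),
          X ^ γ / (γ.factorial : ℝ) * ((u ^ p) ^ γ * (Real.exp (-(E * u ^ p * s)) * s ^ γ)) ≤
          Real.exp (-(u ^ p * s)) - ∑ n ∈ Finset.range γ, X ^ n / (n.factorial : ℝ) *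
            (u ^ p) ^ n * (Real.exp (-(E * u ^ p * s)) * s ^ n) := by
        intro s hs
        have hs0 : (0:ℝ) < s := hs
        have hup0 : (0:ℝ) < u ^ p := Real.rpow_pos_of_pos hu0 p
        set y : ℝ := u ^ p * X * s with hydef
        have hy : (0:ℝ) ≤ y := by rw [hydef]; positivity
        have hsum : (∑ n ∈ Finset.range γ, X ^ n / (n.factorial : ℝ) * (u ^ p) ^ n *
            (Real.exp (-(E * u ^ p * s)) * s ^ n)) =
            Real.exp (-(E * u ^ p * s)) * ∑ n ∈ Finset.range γ, y ^ n / (n.factorial : ℝ) := by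
          rw [Finset.mul_sum]
          refine Finset.sum_congr rfl fun n _ => ?_
          rw [hydef, mul_pow, mul_pow]
          ring
        have hfirst : Real.exp (-(u ^ p * s)) = Real.exp (-(E * u ^ p * s)) * Real.exp y := by
          rw [← Real.exp_add]
          congr 1
          rw [hydef, hXdef]
          ring
        have hglue : X ^ γ / (γ.factorial : ℝ) *
            ((u ^ p) ^ γ * (Real.exp (-(E * u ^ p * s)) * s ^ γ)) =
            Real.exp (-(E * u ^ p * s)) * (y ^ γ / (γ.factorial : ℝ)) := by
          rw [hydef, mul_pow, mul_pow]
          ring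
        rw [hsum, hfirst, hglue]
        have htail := exp_tail hy γ
        have hepos := (Real.exp_pos (-(E * u ^ p * s))).le
        nlinarith [mul_le_mul_of_nonneg_left htail hepos]
      have hsint := setIntegral_mono_on hintmin hintdiff measurableSet_Ioi hptwise
      rw [integral_const_mul, integral_const_mul] at hsint
      have hh2int : (∫ s in Set.Ioi (0:ℝ), h2 u s ∂Q) =
          u ^ q * ∫ s in Set.Ioi (0:ℝ), Real.exp (-(E * u ^ p * s)) * s ^ γ ∂Q := by
        rw [← integral_const_mul]
        refine setIntegral_congr_fun measurableSet_Ioi fun s _ => ?_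
        simp only [hh2def]
        rw [show -(E * s) * u ^ p = -(E * u ^ p * s) from by ring]
        ring
      have hqsplit : u ^ q = (u ^ p) ^ γ * u ^ (-1 - α) := by
        rw [← Real.rpow_natCast (u ^ p) γ, ← Real.rpow_mul hu0.le, ← Real.rpow_add hu0]
        congr 1
        rw [hqdef]; ring
      calc X ^ γ / (γ.factorial : ℝ) * ∫ s in Set.Ioi (0:ℝ), h2 u s ∂Q
          = X ^ γ / (γ.factorial : ℝ) *
            ((u ^ p) ^ γ * ∫ s in Set.Ioi (0:ℝ), Real.exp (-(E * u ^ p * s)) * s ^ γ ∂Q) *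
            u ^ (-1 - α) := by rw [hh2int, hqsplit]; ring
        _ ≤ (∫ s in Set.Ioi (0:ℝ), (Real.exp (-(u ^ p * s)) - ∑ n ∈ Finset.range γ,
              X ^ n / (n.factorial : ℝ) * (u ^ p) ^ n *
                (Real.exp (-(E * u ^ p * s)) * s ^ n)) ∂Q) * u ^ (-1 - α) := by
            exact mul_le_mul_of_nonneg_right hsint hum
        _ = Jf u := by simp only [hJfdef]
    -- bound on κ t
    set I : ℝ := X ^ γ / (γ.factorial : ℝ) *
        ((Real.Gamma ((γ:ℝ) - α/p) * (1/p) * E ^ (α/p - (γ:ℝ))) * S) with hIdef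
    have hI0 : (0:ℝ) < I := by
      have hrp : (0:ℝ) < E ^ (α/p - (γ:ℝ)) := Real.rpow_pos_of_pos hE0 _
      have h1 : (0:ℝ) < X ^ γ := pow_pos hX γ
      rw [hIdef]
      positivity
    have hκb : 0 ≤ κ t ∧ κ t ≤ I⁻¹ := by
      by_cases hInt : Integrable Jf (volume.restrict (Set.Ioi (0:ℝ)))
      · have hJI : I ≤ ∫ u in Set.Ioi (0:ℝ), Jf u := by
          have hle := setIntegral_mono_on (hmarg.const_mul (X ^ γ / (γ.factorial : ℝ)))
            hInt measurableSet_Ioi hpt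
          rw [integral_const_mul] at hle
          calc I = X ^ γ / (γ.factorial : ℝ) *
              ∫ u in Set.Ioi (0:ℝ), (∫ s in Set.Ioi (0:ℝ), h2 u s ∂Q) := by rw [hIdef, hI2]
            _ ≤ _ := hle
        have hJ0 : (0:ℝ) < ∫ u in Set.Ioi (0:ℝ), Jf u := lt_of_lt_of_le hI0 hJI
        constructor
        · rw [hκt]
          exact inv_nonneg.mpr hJ0.le
        · rw [hκt]
          exact inv_anti₀ hI0 hJI
      · rw [hκt, integral_undef hInt, inv_zero]
        exact ⟨le_rfl, inv_nonneg.mpr hI0.le⟩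
    -- bound on V₂' t
    have hCe : Real.exp (lam * t * p) = E := by
      rw [hEdef]
      congr 1
      ring
    have hCγt : Cγ t = X ^ γ / (γ.factorial : ℝ) * CA := by
      rw [hC t ht, hCe, ← hXdef, hCAdef]
    have hV₂'t : V₂' t = max (min 1 (Real.exp (-(γ:ℝ)) * (γ:ℝ) ^ γ * X ^ γ /
        (γ.factorial : ℝ))) (Cγ t) := by
      rw [hV₂' t ht, ← hEdef, ← hXdef]
    have hXγnn : (0:ℝ) ≤ X ^ γ := (pow_pos hX γ).le
    have hfrac0 : (0:ℝ) ≤ X ^ γ / (γ.factorial : ℝ) := div_nonneg hXγnn hfac.le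
    have hW0 : 0 ≤ V₂' t := by
      rw [hV₂'t]
      refine le_max_of_le_left (le_min zero_le_one ?_)
      exact div_nonneg (mul_nonneg (mul_nonneg (Real.exp_pos _).le (by positivity)) hXγnn)
        hfac.le
    have hW : V₂' t ≤ X ^ γ / (γ.factorial : ℝ) * M := by
      rw [hV₂'t]
      apply max_le
      · refine (min_le_right _ _).trans ?_
        rw [show Real.exp (-(γ:ℝ)) * (γ:ℝ) ^ γ * X ^ γ / (γ.factorial : ℝ) =
          X ^ γ / (γ.factorial : ℝ) * (Real.exp (-(γ:ℝ)) * (γ:ℝ) ^ γ) from by ring]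
        refine mul_le_mul_of_nonneg_left ?_ hfrac0
        rw [hMdef]
        exact le_max_left _ _
      · rw [hCγt]
        refine mul_le_mul_of_nonneg_left ?_ hfrac0
        rw [hMdef, hCAdef]
        exact le_max_right _ _
    have hc0 : (0:ℝ) ≤ (γ:ℝ) * p / (α * ((γ:ℝ) * p - α)) := by positivity
    have hfinal : I⁻¹ * ((γ:ℝ) * p / (α * ((γ:ℝ) * p - α))) * (X ^ γ / (γ.factorial : ℝ) * M) =
        R * Real.exp (lam * t * ((γ:ℝ) * p - α)) := by
      have hEex : Real.exp (lam * t * ((γ:ℝ) * p - α)) = E ^ ((γ:ℝ) - α/p) := by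
        rw [hEdef, ← Real.exp_mul]
        congr 1
        field_simp
      have hEneg : E ^ (α/p - (γ:ℝ)) = (E ^ ((γ:ℝ) - α/p))⁻¹ := by
        rw [show α/p - (γ:ℝ) = -((γ:ℝ) - α/p) from by ring, Real.rpow_neg hE0.le]
      have hA0 : (0:ℝ) < E ^ ((γ:ℝ) - α/p) := Real.rpow_pos_of_pos hE0 _
      have hXγ : X ^ γ ≠ 0 := (pow_pos hX γ).ne'
      have hn1 := hG0.ne'
      have hn2 := hS.ne'
      have hn3 := hA0.ne'
      have hn4 := hp.ne'
      have hn5 := hα0.ne'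
      have hn6 := hγpα.ne'
      have hn7 := hfac.ne'
      rw [hIdef, hRdef, hEex, hEneg]
      field_simp
    constructor
    · rw [hV₂ t ht]
      exact mul_nonneg (mul_nonneg hκb.1 hc0) hW0
    · rw [hV₂ t ht]
      calc κ t * ((γ:ℝ) * p / (α * ((γ:ℝ) * p - α))) * V₂' t
          ≤ I⁻¹ * ((γ:ℝ) * p / (α * ((γ:ℝ) * p - α))) * (X ^ γ / (γ.factorial : ℝ) * M) := by
            apply mul_le_mul (mul_le_mul_of_nonneg_right hκb.2 hc0) hW hW0
            exact mul_nonneg (inv_nonneg.mpr hI0.le) hc0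
        _ = R * Real.exp (lam * t * ((γ:ℝ) * p - α)) := hfinal

  -- limsup part
  have hFlim : Tendsto (fun t => R * Real.exp (lam * t * ((γ:ℝ)*p - α)))
      (nhdsWithin 0 (Set.Ioi 0)) (nhds R) := by
    have hc : Continuous fun t : ℝ => R * Real.exp (lam * t * ((γ:ℝ)*p - α)) :=
      continuous_const.mul (Real.continuous_exp.comp
        ((continuous_const.mul continuous_id).mul continuous_const))
    have h0 := (hc.tendsto 0).mono_left (nhdsWithin_le_nhds (s := Set.Ioi (0:ℝ)))
    simpa using h0
  have hev : V₂ ≤ᶠ[nhdsWithin 0 (Set.Ioi 0)]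
      fun t => R * Real.exp (lam * t * ((γ:ℝ)*p - α)) :=
    eventually_nhdsWithin_of_forall fun t ht => (key t ht).2
  have hco : IsCoboundedUnder (· ≤ ·) (nhdsWithin 0 (Set.Ioi 0)) V₂ :=
    isCoboundedUnder_le_of_eventually_le _
      (eventually_nhdsWithin_of_forall fun t ht => (key t ht).1)
  calc Filter.limsup V₂ (nhdsWithin 0 (Set.Ioi 0))
      ≤ Filter.limsup (fun t => R * Real.exp (lam * t * ((γ:ℝ)*p - α)))
        (nhdsWithin 0 (Set.Ioi 0)) :=
        limsup_le_limsup hev hco hFlim.isBoundedUnder_le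
    _ = R := hFlim.limsup_eq
end
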